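/- The Elko spin sums equal m times (identity plus/minus G(φ)): Σ_{α ∈ {(-,+),(+,-)}} λ^S_α · ¬λ^S_α = m·(1 + G(φ)) and Σ_{α ∈ {(-,+),(+,-)}} λ^A_α · ¬λ^A_α = -m·(1 - G(φ)), as 4×4 complex matrices (outer products of columns with dual rows). In particular the spin sums depend on the azimuthal angle φ, breaking Lorentz covariance. -/

import Mathlib

open Matrix Complex

noncomputable section

/-- Pauli matrices -/
def σ1 : Matrix (Fin 2) (Fin 2) ℂ := !![0, 1; 1, 0]
def σ2 : Matrix (Fin 2) (Fin 2) ℂ := !![0, -I; I, 0]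
def σ3 : Matrix (Fin 2) (Fin 2) ℂ := !![1, 0; 0, -1]

/-- Dirac matrices in the Weyl representation, blocks [[0,1],[1,0]], [[0,σk],[-σk,0]] -/
def γ0 : Matrix (Fin 4) (Fin 4) ℂ := !![0,0,1,0; 0,0,0,1; 1,0,0,0; 0,1,0,0]
def γ1 : Matrix (Fin 4) (Fin 4) ℂ := !![0,0,0,1; 0,0,1,0; 0,-1,0,0; -1,0,0,0]
def γ2 : Matrix (Fin 4) (Fin 4) ℂ := !![0,0,0,-I; 0,0,I,0; 0,I,0,0; -I,0,0,0]
def γ3 : Matrix (Fin 4) (Fin 4) ℂ := !![0,0,1,0; 0,0,0,-1; -1,0,0,0; 0,1,0,0]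

/-- the energy E = sqrt(p² + m²) -/
def Ee (m p : ℝ) : ℝ := Real.sqrt (p^2 + m^2)
/-- boost factors B± = sqrt((E+m)/2)(1 ± p/(E+m)) -/
def Bp (m p : ℝ) : ℝ := Real.sqrt ((Ee m p + m)/2) * (1 + p/(Ee m p + m))
def Bm (m p : ℝ) : ℝ := Real.sqrt ((Ee m p + m)/2) * (1 - p/(Ee m p + m))

/-- e^{iφ/2}, e^{-iφ/2}, e^{iφ}, e^{-iφ} -/
def eP (φ : ℝ) : ℂ := Complex.exp (I * (φ:ℂ) / 2)
def eM (φ : ℝ) : ℂ := Complex.exp (-(I * (φ:ℂ)) / 2)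
def ePf (φ : ℝ) : ℂ := Complex.exp (I * (φ:ℂ))
def eMf (φ : ℝ) : ℂ := Complex.exp (-(I * (φ:ℂ)))

/-- boosted Elko spinors -/
def lamS₁ (m p θ φ : ℝ) : Fin 4 → ℂ :=
  ((Bm m p : ℝ) : ℂ) • ![ -I * (Real.sin (θ/2) : ℂ) * eM φ,
                           I * (Real.cos (θ/2) : ℂ) * eP φ,
                           (Real.cos (θ/2) : ℂ) * eM φ,
                           (Real.sin (θ/2) : ℂ) * eP φ ]

def lamS₂ (m p θ φ : ℝ) : Fin 4 → ℂ :=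
  ((Bp m p : ℝ) : ℂ) • ![ I * (Real.cos (θ/2) : ℂ) * eM φ,
                           I * (Real.sin (θ/2) : ℂ) * eP φ,
                           (Real.sin (θ/2) : ℂ) * eM φ,
                           -(Real.cos (θ/2) : ℂ) * eP φ ]

def lamA₁ (m p θ φ : ℝ) : Fin 4 → ℂ :=
  ((Bm m p : ℝ) : ℂ) • ![ I * (Real.sin (θ/2) : ℂ) * eM φ,
                           -I * (Real.cos (θ/2) : ℂ) * eP φ,
                           (Real.cos (θ/2) : ℂ) * eM φ,
                           (Real.sin (θ/2) : ℂ) * eP φ ]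

def lamA₂ (m p θ φ : ℝ) : Fin 4 → ℂ :=
  ((Bp m p : ℝ) : ℂ) • ![ -I * (Real.cos (θ/2) : ℂ) * eM φ,
                           -I * (Real.sin (θ/2) : ℂ) * eP φ,
                           (Real.sin (θ/2) : ℂ) * eM φ,
                           -(Real.cos (θ/2) : ℂ) * eP φ ]

/-- the Ξ(p) operator -/
def Ξop (m p θ φ : ℝ) : Matrix (Fin 4) (Fin 4) ℂ :=
  (1/(m:ℂ)) •
    !![ I * ((p * Real.sin θ : ℝ) : ℂ),
        -I * ((Ee m p + p * Real.cos θ : ℝ) : ℂ) * eMf φ, 0, 0;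
        I * ((Ee m p - p * Real.cos θ : ℝ) : ℂ) * ePf φ,
        -I * ((p * Real.sin θ : ℝ) : ℂ), 0, 0;
        0, 0, -I * ((p * Real.sin θ : ℝ) : ℂ),
        -I * ((Ee m p - p * Real.cos θ : ℝ) : ℂ) * eMf φ;
        0, 0, I * ((Ee m p + p * Real.cos θ : ℝ) : ℂ) * ePf φ,
        I * ((p * Real.sin θ : ℝ) : ℂ) ]

/-- the G(φ) matrix appearing in the Elko spin sums -/
def Gmat (φ : ℝ) : Matrix (Fin 4) (Fin 4) ℂ :=
  !![0, 0, 0, -I * eMf φ;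
     0, 0, I * ePf φ, 0;
     0, -I * eMf φ, 0, 0;
     I * ePf φ, 0, 0, 0]

/-- momentum slash pslash = E γ0 + p sinθ cosφ γ1 + p sinθ sinφ γ2 + p cosθ γ3 -/
def pslash (m p θ φ : ℝ) : Matrix (Fin 4) (Fin 4) ℂ :=
  ((Ee m p : ℝ) : ℂ) • γ0 + ((p * Real.sin θ * Real.cos φ : ℝ) : ℂ) • γ1
    + ((p * Real.sin θ * Real.sin φ : ℝ) : ℂ) • γ2 + ((p * Real.cos θ : ℝ) : ℂ) • γ3

/-- Elko dual rows ¬λ -/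
def dS₁ (m p θ φ : ℝ) : Fin 4 → ℂ := I • Matrix.vecMul (star (lamS₂ m p θ φ)) γ0
def dS₂ (m p θ φ : ℝ) : Fin 4 → ℂ := (-I) • Matrix.vecMul (star (lamS₁ m p θ φ)) γ0
def dA₁ (m p θ φ : ℝ) : Fin 4 → ℂ := I • Matrix.vecMul (star (lamA₂ m p θ φ)) γ0
def dA₂ (m p θ φ : ℝ) : Fin 4 → ℂ := (-I) • Matrix.vecMul (star (lamA₁ m p θ φ)) γ0

end

/-! The boost factors are real with B₋B₊ = ((E + m)² - p²) / (2(E + m)) = m, so every term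
λ_α ¬λ_α of a spin sum is m times the same product of the rest-frame spinors, and the spin sum
reduces to its value at p = 0. There s² + c² = 1 produces the identity and the phases e^{±iφ/2}
pair up into the e^{±iφ} of G(φ).

The antiself-conjugate spinors are γ⁵ times the self-conjugate ones. As γ⁵ is Hermitian and
anticommutes with γ⁰, the Elko dual of γ⁵λ is -¬λ γ⁵, so the second spin sum is
-γ⁵ m(1 + G(φ)) γ⁵ = -m(1 - G(φ)), because G(φ) only links the two chiral blocks. -/

theorem Bm_mul_Bp {m : ℝ} (hm : 0 < m) (p : ℝ) : Bm m p * Bp m p = m := by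
  have hE : Ee m p ^ 2 = p ^ 2 + m ^ 2 := Real.sq_sqrt (by positivity)
  have hEm : 0 < Ee m p + m := add_pos_of_nonneg_of_pos (Real.sqrt_nonneg _) hm
  calc Bm m p * Bp m p
      = Real.sqrt ((Ee m p + m) / 2) ^ 2 * (1 - (p / (Ee m p + m)) ^ 2) := by unfold Bm Bp; ring
    _ = m := by
      rw [Real.sq_sqrt (by positivity)]
      field_simp
      linear_combination hE

theorem eP_mul_eM (φ : ℝ) : eP φ * eM φ = 1 := by
  rw [eP, eM, ← Complex.exp_add, ← Complex.exp_zero]; ring_nf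

theorem eP_sq (φ : ℝ) : eP φ ^ 2 = ePf φ := by
  rw [eP, ePf, ← Complex.exp_nat_mul]; ring_nf

theorem eM_sq (φ : ℝ) : eM φ ^ 2 = eMf φ := by
  rw [eM, eMf, ← Complex.exp_nat_mul]; ring_nf

theorem conj_eP (φ : ℝ) : starRingEnd ℂ (eP φ) = eM φ := by
  rw [eP, eM, ← Complex.exp_conj]; simp [Complex.conj_ofReal, map_ofNat]

theorem conj_eM (φ : ℝ) : starRingEnd ℂ (eM φ) = eP φ := by
  rw [eP, eM, ← Complex.exp_conj]; simp [Complex.conj_ofReal, map_ofNat]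

theorem vecMul_γ0 (v : Fin 4 → ℂ) : v ᵥ* γ0 = ![v 2, v 3, v 0, v 1] := by
  ext i; fin_cases i <;> simp [γ0, vecMul, dotProduct, Fin.sum_univ_four]

theorem vecMulVec_ofReal_smul_dual {n : Type*} [Fintype n] (a b : ℝ) (c : ℂ)
    (u v : n → ℂ) (M : Matrix n n ℂ) :
    vecMulVec ((a : ℂ) • u) (c • (star ((b : ℂ) • v) ᵥ* M))
      = ((a * b : ℝ) : ℂ) • vecMulVec u (c • (star v ᵥ* M)) := by
  rw [star_smul, Complex.star_def, Complex.conj_ofReal, smul_vecMul, smul_comm c,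
    vecMulVec_smul, smul_vecMulVec, smul_smul, Complex.ofReal_mul, mul_comm]

theorem vecMulVec_mulVec_dual_of_anticomm {n : Type*} [Fintype n] {P M : Matrix n n ℂ}
    (hP : Pᴴ = P) (hPM : P * M = -(M * P)) (c : ℂ) (u v : n → ℂ) :
    vecMulVec (P *ᵥ u) (c • (star (P *ᵥ v) ᵥ* M))
      = -(P * vecMulVec u (c • (star v ᵥ* M)) * P) := by
  rw [star_mulVec, hP, vecMul_vecMul, hPM, mul_vecMulVec, vecMulVec_mul, vecMul_neg, smul_neg,
    vecMulVec_neg, smul_vecMul, vecMul_vecMul]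

noncomputable def restS₁ (θ φ : ℝ) : Fin 4 → ℂ :=
  ![ -I * (Real.sin (θ/2) : ℂ) * eM φ,
      I * (Real.cos (θ/2) : ℂ) * eP φ,
      (Real.cos (θ/2) : ℂ) * eM φ,
      (Real.sin (θ/2) : ℂ) * eP φ ]

noncomputable def restS₂ (θ φ : ℝ) : Fin 4 → ℂ :=
  ![ I * (Real.cos (θ/2) : ℂ) * eM φ,
     I * (Real.sin (θ/2) : ℂ) * eP φ,
     (Real.sin (θ/2) : ℂ) * eM φ,
     -(Real.cos (θ/2) : ℂ) * eP φ ]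

theorem lamS₁_eq_smul (m p θ φ : ℝ) : lamS₁ m p θ φ = (Bm m p : ℂ) • restS₁ θ φ := rfl

theorem lamS₂_eq_smul (m p θ φ : ℝ) : lamS₂ m p θ φ = (Bp m p : ℂ) • restS₂ θ φ := rfl

theorem restS_spinSum (θ φ : ℝ) :
    vecMulVec (restS₁ θ φ) (I • (star (restS₂ θ φ) ᵥ* γ0))
      + vecMulVec (restS₂ θ φ) (-I • (star (restS₁ θ φ) ᵥ* γ0)) = 1 + Gmat φ := by
  have hsc : (Real.sin (θ/2) : ℂ) ^ 2 + (Real.cos (θ/2) : ℂ) ^ 2 = 1 := by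
    exact_mod_cast Real.sin_sq_add_cos_sq _
  have hPM := eP_mul_eM φ
  have hI := Complex.I_sq
  rw [Gmat, ← eP_sq, ← eM_sq]
  unfold restS₁ restS₂
  generalize Real.sin (θ/2) = s at hsc ⊢
  generalize Real.cos (θ/2) = c at hsc ⊢
  ext i j
  fin_cases i <;> fin_cases j <;>
    simp [vecMul_γ0, conj_eP, conj_eM, Complex.conj_ofReal, one_apply] <;>
    grind

theorem lamS_spinSum {m : ℝ} (hm : 0 < m) (p θ φ : ℝ) :
    vecMulVec (lamS₁ m p θ φ) (dS₁ m p θ φ) + vecMulVec (lamS₂ m p θ φ) (dS₂ m p θ φ)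
      = (m : ℂ) • (1 + Gmat φ) := by
  rw [dS₁, dS₂, lamS₁_eq_smul, lamS₂_eq_smul, vecMulVec_ofReal_smul_dual,
    vecMulVec_ofReal_smul_dual, mul_comm (Bp m p), ← smul_add, Bm_mul_Bp hm, restS_spinSum]

noncomputable def γ5 : Matrix (Fin 4) (Fin 4) ℂ := I • (γ0 * γ1 * γ2 * γ3)

theorem γ5_eq : γ5 = !![-1, 0, 0, 0; 0, -1, 0, 0; 0, 0, 1, 0; 0, 0, 0, 1] := by
  unfold γ5 γ0 γ1 γ2 γ3
  ext i j; fin_cases i <;> fin_cases j <;> simp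

theorem conjTranspose_γ5 : γ5ᴴ = γ5 := by
  rw [γ5_eq]; ext i j; fin_cases i <;> fin_cases j <;> simp

theorem γ5_mul_γ0 : γ5 * γ0 = -(γ0 * γ5) := by
  ext i j; fin_cases i <;> fin_cases j <;> simp [γ5_eq, γ0]

theorem γ5_mul_γ5 : γ5 * γ5 = 1 := by
  ext i j; fin_cases i <;> fin_cases j <;> simp [γ5_eq]

theorem γ5_mul_Gmat_mul_γ5 (φ : ℝ) : γ5 * Gmat φ * γ5 = -Gmat φ := by
  ext i j; fin_cases i <;> fin_cases j <;> simp [γ5_eq, Gmat]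

theorem lamA₁_eq_γ5_mulVec (m p θ φ : ℝ) : lamA₁ m p θ φ = γ5 *ᵥ lamS₁ m p θ φ := by
  ext i; fin_cases i <;> simp [γ5_eq, lamA₁, lamS₁]

theorem lamA₂_eq_γ5_mulVec (m p θ φ : ℝ) : lamA₂ m p θ φ = γ5 *ᵥ lamS₂ m p θ φ := by
  ext i; fin_cases i <;> simp [γ5_eq, lamA₂, lamS₂]

theorem lamA_spinSum {m : ℝ} (hm : 0 < m) (p θ φ : ℝ) :
    vecMulVec (lamA₁ m p θ φ) (dA₁ m p θ φ) + vecMulVec (lamA₂ m p θ φ) (dA₂ m p θ φ)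
      = -((m : ℂ) • (1 - Gmat φ)) := by
  have hγ5 : γ5 * ((m : ℂ) • (1 + Gmat φ)) * γ5 = (m : ℂ) • (1 - Gmat φ) := by
    rw [Matrix.mul_smul, Matrix.smul_mul, Matrix.mul_add, Matrix.add_mul, Matrix.mul_one,
      γ5_mul_γ5, γ5_mul_Gmat_mul_γ5, sub_eq_add_neg]
  rw [dA₁, dA₂, lamA₁_eq_γ5_mulVec, lamA₂_eq_γ5_mulVec,
    vecMulVec_mulVec_dual_of_anticomm conjTranspose_γ5 γ5_mul_γ0,
    vecMulVec_mulVec_dual_of_anticomm conjTranspose_γ5 γ5_mul_γ0, ← neg_add, ← Matrix.add_mul,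
    ← Matrix.mul_add, ← dS₁, ← dS₂, lamS_spinSum hm, hγ5]

theorem smul_one_add_Gmat_zero_ne_pi {m : ℝ} (hm : m ≠ 0) :
    (m : ℂ) • (1 + Gmat 0) ≠ (m : ℂ) • (1 + Gmat Real.pi) := by
  intro h
  have h30 := congrFun (congrFun h 3) 0
  simp [Gmat, ePf, hm] at h30
  rw [mul_comm, Complex.exp_pi_mul_I] at h30
  norm_num at h30

theorem elko_spin_sums_general (m p θ φ : ℝ) (hm : 0 < m) :
    Matrix.vecMulVec (lamS₁ m p θ φ) (dS₁ m p θ φ)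
      + Matrix.vecMulVec (lamS₂ m p θ φ) (dS₂ m p θ φ)
      = (m : ℂ) • ((1 : Matrix (Fin 4) (Fin 4) ℂ) + Gmat φ) ∧
    Matrix.vecMulVec (lamA₁ m p θ φ) (dA₁ m p θ φ)
      + Matrix.vecMulVec (lamA₂ m p θ φ) (dA₂ m p θ φ)
      = -((m : ℂ) • ((1 : Matrix (Fin 4) (Fin 4) ℂ) - Gmat φ)) ∧
    (∃ φ₁ φ₂ : ℝ,
      (m : ℂ) • ((1 : Matrix (Fin 4) (Fin 4) ℂ) + Gmat φ₁) ≠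
        (m : ℂ) • ((1 : Matrix (Fin 4) (Fin 4) ℂ) + Gmat φ₂)) :=
  ⟨lamS_spinSum hm p θ φ, lamA_spinSum hm p θ φ, 0, Real.pi, smul_one_add_Gmat_zero_ne_pi hm.ne'⟩

/-- The Elko spin sums: Σ_α λ^S_α ¬λ^S_α = m(1 + G(φ)) and Σ_α λ^A_α ¬λ^A_α = -m(1 - G(φ));
in particular the spin sums depend on the azimuthal angle φ, breaking Lorentz covariance. -/
theorem elko_spin_sums (m p θ φ : ℝ) (hm : 0 < m) (hp : 0 ≤ p) :
    Matrix.vecMulVec (lamS₁ m p θ φ) (dS₁ m p θ φ)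
      + Matrix.vecMulVec (lamS₂ m p θ φ) (dS₂ m p θ φ)
      = (m : ℂ) • ((1 : Matrix (Fin 4) (Fin 4) ℂ) + Gmat φ) ∧
    Matrix.vecMulVec (lamA₁ m p θ φ) (dA₁ m p θ φ)
      + Matrix.vecMulVec (lamA₂ m p θ φ) (dA₂ m p θ φ)
      = -((m : ℂ) • ((1 : Matrix (Fin 4) (Fin 4) ℂ) - Gmat φ)) ∧
    (∃ φ₁ φ₂ : ℝ,
      (m : ℂ) • ((1 : Matrix (Fin 4) (Fin 4) ℂ) + Gmat φ₁) ≠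
        (m : ℂ) • ((1 : Matrix (Fin 4) (Fin 4) ℂ) + Gmat φ₂)) :=
  elko_spin_sums_general m p θ φ hm
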